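/- There exists a closed, bounded, convex, symmetric subset K of the unit ball of c with diameter 2 such that every slice of K has diameter 2, yet K contains nonempty relatively weakly open subsets of arbitrarily small diameter. -/

import Mathlib

open Filter Topology

noncomputable section

/-- The ambient space: bounded real sequences indexed by the positive integers,
with the sup norm.  The space `c` of convergent sequences sits inside it. -/
abbrev cSp : Type := lp (fun _ : ℕ+ => ℝ) ⊤

/-- A "good encoding" `φ : ℕ^{<ω} → ℕ` : a bijection from finite sequences of positive
integers to positive integers sending the empty sequence to `1`, monotone for the prefix
order, and strictly increasing in the last coordinate. -/
def GoodEnc (e : List ℕ+ ≃ ℕ+) : Prop :=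
  e [] = 1 ∧ (∀ α β : List ℕ+, α <+: β → e α ≤ e β) ∧
    ∀ α : List ℕ+, StrictMono fun j : ℕ+ => e (α ++ [j])

/-- The element `x_α ∈ c`: coordinate `i` equals `1` if `φ⁻¹(i)` is a prefix of `α`
and `-1` otherwise. -/
def xel (e : List ℕ+ ≃ ℕ+) (α : List ℕ+) : cSp :=
  ⟨fun i => if e.symm i <+: α then (1 : ℝ) else -1, by
    apply memℓp_infty
    refine ⟨1, ?_⟩
    rintro r ⟨i, rfl⟩
    by_cases h : e.symm i <+: α <;> simp [h]⟩

/-- `A = {x_α : α ∈ ℕ^{<ω}}`. -/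
def Aset (e : List ℕ+ ≃ ℕ+) : Set cSp := Set.range (xel e)

/-- `K` = closed convex hull of `A ∪ (−A)`. -/
def Kset (e : List ℕ+ ≃ ℕ+) : Set cSp := closure (convexHull ℝ (Aset e ∪ -Aset e))

/-- `U` is open for the weak topology of `X`. -/
def WOpen {X : Type*} [NormedAddCommGroup X] [NormedSpace ℝ X] (U : Set X) : Prop :=
  IsOpen (X := WeakSpace ℝ X) U

/-!
`K` is the closed convex hull of the points `±x_α`, where `x_α` is `+1` exactly at the
coordinates indexed by prefixes of `α`. Each `x_α` is `-1` off finitely many coordinates, so `K`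
lies in `c` whatever the bijection `φ` is.

Slices. A slice of `K` contains some `±x_α`. Since `x_{α++[j]} - x_α = 2 e_{φ(α++[j])}` and
`f(e_m) → 0` for every `f ∈ ℓ∞*` (the series `∑ |f(e_m)|` is bounded by `‖f‖`), the slice also
contains `±x_{α++[j]}` for all large `j`, and any two of these are at distance `2`.

Weakly open sets. Let `b = (x_{[1]} + ⋯ + x_{[n]}) / n`. For every antichain `Γ` of the prefix
order, the functional `x ↦ ∑_{γ ∈ Γ} x(γ) + (|Γ| - 1) x([])` takes the values `±1` at the points
`±x_β`, since at most one element of `Γ` is a prefix of `β`; hence it is `≤ 1` on `K`. For `x ∈ K`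
whose coordinates at `[]` and `[1], …, [n]` are those of `b` up to `1/n²`, the antichain
`{a :: l} ∪ {[j] : j ≤ n, j ≠ a}` forces `x(a :: l) ≤ -1 + 4/n`, so `x` is `4/n`-close to `b`.
-/

lemma tendsto_dual_single_cofinite {α : Type*} [DecidableEq α]
    (f : StrongDual ℝ (lp (fun _ : α => ℝ) ⊤)) :
    Tendsto (fun i => f (lp.single ⊤ i 1)) cofinite (𝓝 0) := by
  refine (Summable.of_abs ?_).tendsto_cofinite_zero
  refine summable_of_sum_le (c := ‖f‖) (fun _ => abs_nonneg _) fun S => ?_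
  obtain ⟨σ, hσ, hσf⟩ : ∃ σ : α → ℝ,
      (∀ i, |σ i| ≤ 1) ∧ ∀ i, σ i * f (lp.single ⊤ i 1) = |f (lp.single ⊤ i 1)| :=
    ⟨fun i => SignType.sign (f (lp.single ⊤ i 1)),
      fun i => by rcases lt_trichotomy (f (lp.single ⊤ i 1)) 0 with h | h | h <;> simp [h],
      fun i => sign_mul_self _⟩
  have hnorm : ‖∑ i ∈ S, σ i • lp.single ⊤ i (1 : ℝ)‖ ≤ 1 := by
    refine lp.norm_le_of_forall_le zero_le_one fun j => ?_
    rw [lp.coeFn_sum, Finset.sum_apply]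
    by_cases hj : j ∈ S <;> simp [lp.coeFn_smul, lp.single_apply, Pi.single_apply, hj, hσ j]
  calc ∑ i ∈ S, |f (lp.single ⊤ i 1)| = f (∑ i ∈ S, σ i • lp.single ⊤ i 1) := by
        simp only [map_sum, map_smul, smul_eq_mul, hσf]
    _ ≤ ‖f‖ * ‖∑ i ∈ S, σ i • lp.single ⊤ i (1 : ℝ)‖ := (le_abs_self _).trans (f.le_opNorm _)
    _ ≤ ‖f‖ := mul_le_of_le_one_right (norm_nonneg f) hnorm

def convergentSeqs : Submodule ℝ cSp where
  carrier := {x | ∃ l, Tendsto (x : ℕ+ → ℝ) atTop (𝓝 l)}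
  add_mem' := fun ⟨l, hl⟩ ⟨l', hl'⟩ => ⟨l + l', by rw [lp.coeFn_add]; exact hl.add hl'⟩
  zero_mem' := ⟨0, by rw [lp.coeFn_zero]; exact tendsto_const_nhds⟩
  smul_mem' := fun c _ ⟨l, hl⟩ => ⟨c * l, by rw [lp.coeFn_smul]; exact hl.const_mul c⟩

lemma isClosed_convergentSeqs : IsClosed (convergentSeqs : Set cSp) := by
  have hcauchy : (convergentSeqs : Set cSp) = {x : cSp | CauchySeq (x : ℕ+ → ℝ)} :=
    Set.ext fun x => ⟨fun ⟨_, hl⟩ => hl.cauchySeq, cauchySeq_tendsto_of_complete⟩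
  rw [hcauchy]
  refine isClosed_of_closure_subset fun x hx => Metric.cauchySeq_iff'.2 fun ε hε => ?_
  obtain ⟨y, hy, hxy⟩ := Metric.mem_closure_iff.1 hx (ε / 3) (by positivity)
  obtain ⟨N, hN⟩ := Metric.cauchySeq_iff'.1 hy (ε / 3) (by positivity)
  have hcoord : ∀ i, dist (x i) (y i) < ε / 3 := fun i =>
    ((lp.lipschitzWith_one_eval ⊤ i).dist_le_mul x y).trans_lt (by simpa using hxy)
  refine ⟨N, fun n hn => ?_⟩
  calc dist (x n) (x N) ≤ dist (x n) (y n) + dist (y n) (y N) + dist (y N) (x N) :=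
        dist_triangle4 _ _ _ _
    _ < ε := by linarith [hcoord n, hcoord N, hN n hn, dist_comm (y N) (x N)]

lemma exists_mem_lt_of_lt_sSup_closure_convexHull {E : Type*} [AddCommGroup E] [Module ℝ E]
    [TopologicalSpace E] {S : Set E} (hS : S.Nonempty) (f : E →L[ℝ] ℝ) {t : ℝ}
    (ht : t < sSup (f '' closure (convexHull ℝ S))) : ∃ s ∈ S, t < f s := by
  have hne : (f '' closure (convexHull ℝ S)).Nonempty :=
    (hS.mono ((subset_convexHull ℝ S).trans subset_closure)).image f
  obtain ⟨_, ⟨z, hz, rfl⟩, htz⟩ := exists_lt_of_lt_csSup hne ht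
  obtain ⟨z', htz', hz'⟩ :=
    mem_closure_iff.1 hz {x | t < f x} (isOpen_lt continuous_const f.continuous) htz
  obtain ⟨s, hs, hz's⟩ :=
    (f.toLinearMap.convexOn convex_univ).exists_ge_of_mem_convexHull (Set.subset_univ S) hz'
  exact ⟨s, hs, htz'.trans_le hz's⟩

lemma wOpen_setOf_forall_abs_sub_lt {E ι : Type*} [NormedAddCommGroup E] [NormedSpace ℝ E]
    (F : Finset ι) (f : ι → StrongDual ℝ E) (x₀ : E) (ε : ℝ) :
    WOpen {x : E | ∀ i ∈ F, |f i x - f i x₀| < ε} := by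
  have hcont : ∀ i, Continuous fun x : WeakSpace ℝ E => f i x := fun i =>
    WeakBilin.eval_continuous _ (f i)
  simp only [WOpen, Set.ofPred_forall]
  exact isOpen_biInter_finset fun i _ =>
    isOpen_lt ((hcont i).sub continuous_const).abs continuous_const

lemma card_filter_prefix_le_one {α : Type*} [DecidableEq α] {Γ : Finset (List α)}
    (hΓ : IsAntichain (· <+: ·) (Γ : Set (List α))) (β : List α) :
    (Γ.filter (· <+: β)).card ≤ 1 := by
  refine Finset.card_le_one.2 fun γ hγ γ' hγ' => ?_
  rw [Finset.mem_filter] at hγ hγ'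
  by_contra hne
  rcases List.prefix_or_prefix_of_prefix hγ.2 hγ'.2 with h | h
  · exact hΓ hγ.1 hγ'.1 hne h
  · exact hΓ hγ'.1 hγ.1 (Ne.symm hne) h

lemma isAntichain_insert_cons_image_singleton {α : Type*} [DecidableEq α] {a : α} {J : Finset α}
    (ha : a ∉ J) (l : List α) :
    IsAntichain (· <+: ·) (↑(insert (a :: l) (J.image fun j => [j])) : Set (List α)) := by
  rw [Finset.coe_insert, Finset.coe_image]
  refine IsAntichain.insert ?_ ?_ ?_
  · rintro _ ⟨j, -, rfl⟩ _ ⟨j', -, rfl⟩ hne h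
    exact hne (by simpa using h)
  · rintro _ ⟨j, hj, rfl⟩ - h
    exact ha ((List.cons_prefix_cons.1 h).1 ▸ hj)
  · rintro _ ⟨j, hj, rfl⟩ - h
    exact ha ((List.cons_prefix_cons.1 h).1 ▸ hj)

def barycenterXel (e : List ℕ+ ≃ ℕ+) (n : ℕ+) : cSp :=
  ∑ j ∈ Finset.Icc 1 n, (n : ℝ)⁻¹ • xel e [j]

section

variable {e : List ℕ+ ≃ ℕ+}

lemma xel_apply_equiv (α γ : List ℕ+) : xel e α (e γ) = if γ <+: α then 1 else -1 := by
  simp [xel]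

lemma norm_xel_le_one (α : List ℕ+) : ‖xel e α‖ ≤ 1 :=
  lp.norm_le_of_forall_le zero_le_one fun i => by
    by_cases h : e.symm i <+: α <;> simp [xel, h]

lemma two_le_dist_xel {β γ : List ℕ+} (h : ¬β <+: γ) : 2 ≤ dist (xel e β) (xel e γ) := by
  have := (lp.lipschitzWith_one_eval ⊤ (e β)).dist_le_mul (xel e β) (xel e γ)
  norm_num [xel_apply_equiv, h, Real.dist_eq] at this
  exact this

lemma xel_append_singleton (α : List ℕ+) (j : ℕ+) :
    xel e (α ++ [j]) = xel e α + (2 : ℝ) • lp.single ⊤ (e (α ++ [j])) (1 : ℝ) := by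
  ext i
  obtain ⟨γ, rfl⟩ := e.surjective i
  rw [lp.coeFn_add, lp.coeFn_smul, Pi.add_apply, Pi.smul_apply, smul_eq_mul]
  by_cases hγ : γ = α ++ [j]
  · subst hγ
    have : ¬α ++ [j] <+: α := fun h => by simpa using h.length_le
    norm_num [xel_apply_equiv, lp.single_apply, this]
  · simp [xel_apply_equiv, lp.single_apply, List.prefix_concat_iff, hγ]

lemma xel_mem_convergentSeqs (α : List ℕ+) : xel e α ∈ convergentSeqs := by
  refine ⟨-1, tendsto_const_nhds.congr' ?_⟩
  have hfin : {i : ℕ+ | e.symm i <+: α}.Finite :=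
    (α.inits.finite_toSet.preimage e.symm.injective.injOn).subset fun i hi => by simpa using hi
  filter_upwards [atTop_le_cofinite hfin.compl_mem_cofinite] with i hi
  simp_all [xel]

lemma mem_Aset_union_neg_iff {a : cSp} :
    a ∈ Aset e ∪ -Aset e ↔ ∃ α, ∃ s : ℝ, |s| = 1 ∧ a = s • xel e α := by
  constructor
  · rintro (⟨α, rfl⟩ | ⟨α, hα⟩)
    · exact ⟨α, 1, by simp, by simp⟩
    · exact ⟨α, -1, by simp, by simp [hα]⟩
  · rintro ⟨α, s, hs, rfl⟩
    rcases (abs_eq zero_le_one).1 hs with rfl | rfl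
    · exact Or.inl ⟨α, by simp⟩
    · exact Or.inr ⟨α, by simp⟩

lemma smul_xel_mem_Kset {s : ℝ} (hs : |s| = 1) (α : List ℕ+) : s • xel e α ∈ Kset e :=
  subset_closure (subset_convexHull ℝ _ (mem_Aset_union_neg_iff.2 ⟨α, s, hs, rfl⟩))

lemma xel_mem_Kset (α : List ℕ+) : xel e α ∈ Kset e := by
  simpa using smul_xel_mem_Kset (e := e) (abs_one (α := ℝ)) α

lemma Kset_subset_of_smul_xel_mem {C : Set cSp} (hconv : Convex ℝ C) (hclosed : IsClosed C)
    (hC : ∀ α (s : ℝ), |s| = 1 → s • xel e α ∈ C) : Kset e ⊆ C := by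
  refine closure_minimal (convexHull_min (fun a ha => ?_) hconv) hclosed
  obtain ⟨α, s, hs, rfl⟩ := mem_Aset_union_neg_iff.1 ha
  exact hC α s hs

lemma Kset_subset_closedBall : Kset e ⊆ Metric.closedBall 0 1 :=
  Kset_subset_of_smul_xel_mem (convex_closedBall 0 1) Metric.isClosed_closedBall fun α s hs => by
    simpa [norm_smul, hs] using norm_xel_le_one α

lemma Kset_subset_convergentSeqs : Kset e ⊆ convergentSeqs :=
  Kset_subset_of_smul_xel_mem (Submodule.convex _) isClosed_convergentSeqs fun α s _ =>
    Submodule.smul_mem _ s (xel_mem_convergentSeqs α)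

lemma neg_Kset : -Kset e = Kset e := by
  rw [Kset, neg_closure, ← convexHull_neg, Set.union_neg, neg_neg, Set.union_comm]

lemma isBounded_Kset : Bornology.IsBounded (Kset e) :=
  Metric.isBounded_closedBall.subset Kset_subset_closedBall

lemma diam_le_two_of_subset_Kset {S : Set cSp} (hS : S ⊆ Kset e) : Metric.diam S ≤ 2 :=
  calc Metric.diam S ≤ Metric.diam (Metric.closedBall (0 : cSp) 1) :=
        Metric.diam_mono (hS.trans Kset_subset_closedBall) Metric.isBounded_closedBall
    _ ≤ 2 := by simpa using Metric.diam_closedBall (x := (0 : cSp)) zero_le_one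

lemma diam_Kset : Metric.diam (Kset e) = 2 := by
  refine le_antisymm (diam_le_two_of_subset_Kset subset_rfl) ?_
  calc (2 : ℝ) ≤ dist (xel e [1]) (xel e []) := two_le_dist_xel (by simp)
    _ ≤ Metric.diam (Kset e) :=
      Metric.dist_le_diam_of_mem isBounded_Kset (xel_mem_Kset _) (xel_mem_Kset _)

lemma tendsto_apply_xel_append_singleton (f : StrongDual ℝ cSp) (α : List ℕ+) :
    Tendsto (fun j => f (xel e (α ++ [j]))) atTop (𝓝 (f (xel e α))) := by
  have hinj : Function.Injective fun j : ℕ+ => e (α ++ [j]) := fun j j' h => by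
    simpa using e.injective h
  have hsingle := ((tendsto_dual_single_cofinite f).comp hinj.tendsto_cofinite).mono_left
    atTop_le_cofinite
  simpa [xel_append_singleton] using (hsingle.const_mul 2).const_add (f (xel e α))

lemma diam_slice_Kset (f : StrongDual ℝ cSp) {lam : ℝ} (hlam : 0 < lam) :
    Metric.diam {x ∈ Kset e | sSup (f '' Kset e) - lam < f x} = 2 := by
  obtain ⟨a, ha, hfa⟩ := exists_mem_lt_of_lt_sSup_closure_convexHull (S := Aset e ∪ -Aset e)
    ⟨xel e [], Or.inl ⟨[], rfl⟩⟩ f (sub_lt_self _ hlam)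
  obtain ⟨α, s, hs, rfl⟩ := mem_Aset_union_neg_iff.1 ha
  have hlim : Tendsto (fun j => f (s • xel e (α ++ [j]))) atTop (𝓝 (f (s • xel e α))) := by
    simpa using (tendsto_apply_xel_append_singleton f α).const_mul s
  obtain ⟨N, hN⟩ := eventually_atTop.1 (hlim.eventually (lt_mem_nhds hfa))
  have hmem : ∀ j ≥ N, s • xel e (α ++ [j]) ∈ {x ∈ Kset e | sSup (f '' Kset e) - lam < f x} :=
    fun j hj => ⟨smul_xel_mem_Kset hs _, hN j hj⟩
  have hsub : {x ∈ Kset e | sSup (f '' Kset e) - lam < f x} ⊆ Kset e := fun _ hx => hx.1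
  refine le_antisymm (diam_le_two_of_subset_Kset hsub) ?_
  calc (2 : ℝ) ≤ dist (s • xel e (α ++ [N])) (s • xel e (α ++ [N + 1])) := by
        rw [dist_smul₀, Real.norm_eq_abs, hs, one_mul]
        exact two_le_dist_xel (by simpa using (PNat.lt_add_right N 1).ne)
    _ ≤ _ := Metric.dist_le_diam_of_mem (isBounded_Kset.subset hsub) (hmem N le_rfl)
      (hmem (N + 1) (PNat.lt_add_right N 1).le)

lemma abs_apply_le_one_of_mem_Kset {x : cSp} (hx : x ∈ Kset e) (i : ℕ+) : |x i| ≤ 1 :=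
  (lp.norm_apply_le_norm ENNReal.top_ne_zero x i).trans
    (mem_closedBall_zero_iff.1 (Kset_subset_closedBall hx))

lemma sum_xel_apply_add_mul_apply_nil (Γ : Finset (List ℕ+)) (β : List ℕ+) :
    ∑ γ ∈ Γ, xel e β (e γ) + ((Γ.card : ℝ) - 1) * xel e β (e []) =
      2 * (Γ.filter (· <+: β)).card - 1 := by
  have hsplit := Finset.card_filter_add_card_filter_not (s := Γ) (· <+: β)
  simp only [xel_apply_equiv, List.nil_prefix, if_true, mul_one, Finset.sum_ite,
    Finset.sum_const, nsmul_eq_mul]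
  rw [← hsplit]
  push_cast
  ring

lemma sum_apply_add_mul_apply_nil_le_one {Γ : Finset (List ℕ+)}
    (hΓ : IsAntichain (· <+: ·) (Γ : Set (List ℕ+))) {x : cSp} (hx : x ∈ Kset e) :
    ∑ γ ∈ Γ, x (e γ) + ((Γ.card : ℝ) - 1) * x (e []) ≤ 1 := by
  let g : StrongDual ℝ cSp := ∑ γ ∈ Γ, lp.evalCLM ℝ (fun _ : ℕ+ => ℝ) ⊤ (e γ) +
    ((Γ.card : ℝ) - 1) • lp.evalCLM ℝ (fun _ : ℕ+ => ℝ) ⊤ (e [])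
  have hg : ∀ y : cSp, g y = ∑ γ ∈ Γ, y (e γ) + ((Γ.card : ℝ) - 1) * y (e []) := by
    have hev : ∀ i (y : cSp), lp.evalCLM ℝ (fun _ : ℕ+ => ℝ) ⊤ i y = y i := fun _ _ => rfl
    simp [g, hev]
  suffices Kset e ⊆ {y | g y ≤ 1} by simpa [hg] using this hx
  refine Kset_subset_of_smul_xel_mem (convex_halfSpace_le g.toLinearMap.isLinear 1)
    (isClosed_le g.continuous continuous_const) fun β s hs => ?_
  have hk := card_filter_prefix_le_one hΓ β
  rw [Set.mem_ofPred_eq, map_smul, smul_eq_mul, hg, sum_xel_apply_add_mul_apply_nil]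
  calc s * (2 * (Γ.filter (· <+: β)).card - 1) ≤ |s * (2 * (Γ.filter (· <+: β)).card - 1)| :=
        le_abs_self _
    _ = |2 * ((Γ.filter (· <+: β)).card : ℝ) - 1| := by rw [abs_mul, hs, one_mul]
    _ ≤ 1 := by
      have : ((Γ.filter (· <+: β)).card : ℝ) ≤ 1 := by exact_mod_cast hk
      exact abs_le.2 ⟨by linarith [(Γ.filter (· <+: β)).card.cast_nonneg (α := ℝ)], by linarith⟩

lemma cast_card_Icc_one (n : ℕ+) : ((Finset.Icc 1 n).card : ℝ) = n := by
  simp [PNat.card_Icc]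

lemma barycenterXel_mem_Kset (n : ℕ+) : barycenterXel e n ∈ Kset e := by
  refine subset_closure ((convex_convexHull ℝ _).sum_mem (fun _ _ => by positivity) ?_
    fun j _ => subset_convexHull ℝ _ (Or.inl ⟨[j], rfl⟩))
  rw [Finset.sum_const, nsmul_eq_mul, cast_card_Icc_one, mul_inv_cancel₀ (by positivity)]

lemma barycenterXel_apply (n : ℕ+) (γ : List ℕ+) :
    barycenterXel e n (e γ) = (n : ℝ)⁻¹ * ∑ j ∈ Finset.Icc 1 n, if γ <+: [j] then 1 else -1 := by
  rw [barycenterXel, lp.coeFn_sum, Finset.sum_apply, Finset.mul_sum]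
  simp [lp.coeFn_smul, xel_apply_equiv]

lemma barycenterXel_apply_nil (n : ℕ+) : barycenterXel e n (e []) = 1 := by
  rw [barycenterXel_apply]
  simp

lemma barycenterXel_apply_singleton {n j : ℕ+} (hj : j ≤ n) :
    barycenterXel e n (e [j]) = 2 / n - 1 := by
  have hterm : ∀ k, (if [j] <+: [k] then (1 : ℝ) else -1) = (if j = k then 2 else 0) - 1 := by
    intro k
    by_cases h : j = k <;> norm_num [h]
  rw [barycenterXel_apply, Finset.sum_congr rfl fun k _ => hterm k, Finset.sum_sub_distrib,
    Finset.sum_ite_eq, if_pos (Finset.mem_Icc.2 ⟨one_le, hj⟩), Finset.sum_const,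
    nsmul_eq_mul, cast_card_Icc_one]
  field_simp

lemma barycenterXel_apply_cons {n a : ℕ+} {l : List ℕ+} (h : ¬(a ≤ n ∧ l = [])) :
    barycenterXel e n (e (a :: l)) = -1 := by
  have hterm : ∀ k ∈ Finset.Icc 1 n, (if a :: l <+: [k] then (1 : ℝ) else -1) = -1 := by
    intro k hk
    refine if_neg fun hpre => h ?_
    obtain ⟨rfl, hl⟩ := List.cons_prefix_cons.1 hpre
    exact ⟨(Finset.mem_Icc.1 hk).2, List.prefix_nil.1 hl⟩
  rw [barycenterXel_apply, Finset.sum_congr rfl hterm, Finset.sum_const, nsmul_eq_mul,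
    cast_card_Icc_one]
  field_simp

lemma apply_cons_le_of_mem_Kset {n : ℕ+} {ε : ℝ} (hε : 0 ≤ ε) {x : cSp} (hx : x ∈ Kset e)
    (hnil : 1 - ε < x (e [])) (hsingle : ∀ j ∈ Finset.Icc 1 n, 2 / n - 1 - ε < x (e [j]))
    (a : ℕ+) (l : List ℕ+) : x (e (a :: l)) ≤ -1 + 2 / n + 2 * n * ε := by
  set J := (Finset.Icc 1 n).erase a
  have ha : a :: l ∉ J.image fun j => [j] := by
    simp [J]
  have key := sum_apply_add_mul_apply_nil_le_one
    (isAntichain_insert_cons_image_singleton (Finset.notMem_erase a (Finset.Icc 1 n)) l) hx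
  rw [Finset.sum_insert ha, Finset.sum_image (by simp), Finset.card_insert_of_notMem ha,
    Finset.card_image_of_injective _ List.singleton_injective] at key
  have hsum : (J.card : ℝ) * (2 / n - 1 - ε) ≤ ∑ j ∈ J, x (e [j]) := by
    simpa using Finset.card_nsmul_le_sum J _ _ fun j hj =>
      (hsingle j (Finset.mem_of_mem_erase hj)).le
  have hJ_le : (J.card : ℝ) ≤ n := by
    exact_mod_cast (Finset.card_erase_le).trans (by simp [PNat.card_Icc])
  have hJ_ge : (n : ℝ) - 1 ≤ J.card := by
    have hcard : (Finset.Icc 1 n).card - 1 ≤ J.card := Finset.pred_card_le_card_erase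
    simp only [PNat.card_Icc, PNat.one_coe, Nat.add_sub_cancel] at hcard
    rw [sub_le_iff_le_add]
    exact_mod_cast (by omega : (n : ℕ) ≤ J.card + 1)
  have hnil' : (J.card : ℝ) * (1 - ε) ≤ J.card * x (e []) :=
    mul_le_mul_of_nonneg_left hnil.le (Nat.cast_nonneg _)
  have hn : (2 / n : ℝ) * n = 2 := div_mul_cancel₀ _ (by positivity)
  have h1 : (2 / n : ℝ) * (n - 1 - J.card) ≤ 0 :=
    mul_nonpos_of_nonneg_of_nonpos (by positivity) (by linarith)
  have h2 : ε * (J.card - n) ≤ 0 := mul_nonpos_of_nonneg_of_nonpos hε (by linarith)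
  push_cast at key
  nlinarith

lemma abs_apply_sub_barycenterXel_le {n : ℕ+} {ε : ℝ} {x : cSp} (hx : x ∈ Kset e)
    (hV : ∀ γ ∈ insert [] ((Finset.Icc 1 n).image fun j => [j]),
      |x (e γ) - barycenterXel e n (e γ)| < ε) (i : ℕ+) :
    |x i - barycenterXel e n i| ≤ 2 / n + 2 * n * ε := by
  have hV_nil := hV [] (Finset.mem_insert_self _ _)
  have hV_single : ∀ j ∈ Finset.Icc 1 n, |x (e [j]) - barycenterXel e n (e [j])| < ε :=
    fun j hj => hV [j] (Finset.mem_insert_of_mem (Finset.mem_image_of_mem _ hj))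
  have hε : 0 ≤ ε := (abs_nonneg _).trans hV_nil.le
  have hε_le : ε ≤ 2 / n + 2 * n * ε := by
    have : (1 : ℝ) ≤ n := by exact_mod_cast (one_le : 1 ≤ n)
    have : (0 : ℝ) ≤ 2 / n := by positivity
    nlinarith
  obtain ⟨γ, rfl⟩ := e.surjective i
  rcases γ with _ | ⟨a, l⟩
  · exact hV_nil.le.trans hε_le
  by_cases hal : a ≤ n ∧ l = []
  · obtain ⟨ha, rfl⟩ := hal
    exact (hV_single a (Finset.mem_Icc.2 ⟨one_le, ha⟩)).le.trans hε_le
  have hnil : 1 - ε < x (e []) := by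
    rw [barycenterXel_apply_nil] at hV_nil
    linarith [(abs_lt.1 hV_nil).1]
  have hsingle : ∀ j ∈ Finset.Icc 1 n, 2 / n - 1 - ε < x (e [j]) := fun j hj => by
    have := hV_single j hj
    rw [barycenterXel_apply_singleton (Finset.mem_Icc.1 hj).2] at this
    linarith [(abs_lt.1 this).1]
  have hupper := apply_cons_le_of_mem_Kset hε hx hnil hsingle a l
  have hlower := (abs_le.1 (abs_apply_le_one_of_mem_Kset hx (e (a :: l)))).1
  rw [barycenterXel_apply_cons hal, abs_le]
  constructor <;> linarith

lemma exists_wOpen_inter_Kset_subset_closedBall (n : ℕ+) :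
    ∃ V : Set cSp, WOpen V ∧ barycenterXel e n ∈ V ∩ Kset e ∧
      V ∩ Kset e ⊆ Metric.closedBall (barycenterXel e n) (4 / n) := by
  refine ⟨{x | ∀ γ ∈ insert [] ((Finset.Icc 1 n).image fun j => [j]),
      |x (e γ) - barycenterXel e n (e γ)| < ((n : ℝ) ^ 2)⁻¹},
    wOpen_setOf_forall_abs_sub_lt _ (fun γ => lp.evalCLM ℝ (fun _ : ℕ+ => ℝ) ⊤ (e γ)) _ _,
    ⟨fun γ _ => by simp, barycenterXel_mem_Kset n⟩, fun x ⟨hV, hx⟩ => ?_⟩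
  rw [Metric.mem_closedBall, dist_eq_norm]
  refine lp.norm_le_of_forall_le (by positivity) fun i => ?_
  rw [lp.coeFn_sub, Pi.sub_apply, Real.norm_eq_abs]
  calc _ ≤ 2 / n + 2 * n * ((n : ℝ) ^ 2)⁻¹ := abs_apply_sub_barycenterXel_le hx hV i
    _ = 4 / n := by field_simp; norm_num

lemma exists_wOpen_diam_inter_Kset_lt {δ : ℝ} (hδ : 0 < δ) :
    ∃ V : Set cSp, WOpen V ∧ (V ∩ Kset e).Nonempty ∧ Metric.diam (V ∩ Kset e) < δ := by
  obtain ⟨m, hm⟩ := exists_nat_gt (8 / δ)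
  obtain ⟨V, hV, hmem, hsub⟩ := exists_wOpen_inter_Kset_subset_closedBall (e := e) m.succPNat
  refine ⟨V, hV, ⟨_, hmem⟩, ?_⟩
  have hn : 8 / δ < (m.succPNat : ℝ) := hm.trans (by simp)
  calc Metric.diam (V ∩ Kset e) ≤ 2 * (4 / m.succPNat) :=
        (Metric.diam_mono hsub Metric.isBounded_closedBall).trans
          (Metric.diam_closedBall (by positivity))
    _ < δ := by
      rw [div_lt_iff₀ hδ] at hn
      rw [← mul_div_assoc, div_lt_iff₀ (by positivity)]
      linarith

end

/-- there is a closed, bounded, convex, symmetric subset `K` of the unit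
ball of `c` (the convergent sequences) with diameter `2`, all of whose slices have
diameter `2`, yet containing nonempty relatively weakly open subsets of arbitrarily
small diameter. -/
theorem exists_K_big_slices_small_weak_opens :
    ∃ K : Set cSp,
      K ⊆ Metric.closedBall 0 1 ∧
      (∀ x ∈ K, ∃ l : ℝ, Tendsto (x : ℕ+ → ℝ) atTop (𝓝 l)) ∧
      IsClosed K ∧ Convex ℝ K ∧ K = -K ∧ Metric.diam K = 2 ∧
      (∀ f : StrongDual ℝ cSp, ∀ lam : ℝ, 0 < lam → lam < sSup (f '' K) →
        Metric.diam {x ∈ K | sSup (f '' K) - lam < f x} = 2) ∧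
      ∀ δ : ℝ, 0 < δ →
        ∃ V : Set cSp, WOpen V ∧ (V ∩ K).Nonempty ∧ Metric.diam (V ∩ K) < δ := by
  let e : List ℕ+ ≃ ℕ+ := Denumerable.equiv₂ _ _
  exact ⟨Kset e, Kset_subset_closedBall, fun _ hx => Kset_subset_convergentSeqs hx,
    isClosed_closure, (convex_convexHull ℝ _).closure, neg_Kset.symm, diam_Kset,
    fun f _ hlam _ => diam_slice_Kset f hlam, fun _ hδ => exists_wOpen_diam_inter_Kset_lt hδ⟩
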